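/- arXiv:1603.01318 — 2 statements merged into one kernel-verified Lean document; each statement's English description precedes it below -/
import Mathlib

section
/- Let E be an invertible matrix in ℝ^{n×n} whose rows e_1,...,e_n are probability vectors. Let G, Ĝ, G^1,...,G^n, Ĝ^1,...,Ĝ^n be vectors in ℝ^n such that e_k' G^k = e_k' Ĝ^k for all k, max_k ‖G - G^k‖_∞ ≤ δ, and max_k ‖Ĝ - Ĝ^k‖_∞ ≤ δ. Then ‖G - Ĝ‖_∞ ≤ 2 · ‖E⁻¹‖_∞ · δ, where ‖E⁻¹‖_∞ is the induced ∞-norm of E⁻¹. -/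
/-- Max (infinity) norm of a vector in ℝ^n. -/
noncomputable def normInf {n : ℕ} (v : Fin n → ℝ) : ℝ := ⨆ i, |v i|

/-- Induced operator ∞-norm of a matrix: sup of ‖Mx‖_∞/‖x‖_∞ over x ≠ 0. -/
noncomputable def opNormInf {n : ℕ} (M : Matrix (Fin n) (Fin n) ℝ) : ℝ :=
  sSup {c | ∃ x : Fin n → ℝ, x ≠ 0 ∧ c = normInf (M.mulVec x) / normInf x}

lemma abs_le_normInf {n : ℕ} (v : Fin n → ℝ) (i : Fin n) : |v i| ≤ normInf v := by
  unfold normInf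
  exact le_ciSup (Set.Finite.bddAbove (Set.finite_range fun i => |v i|)) i

lemma normInf_nonneg {n : ℕ} [Nonempty (Fin n)] (v : Fin n → ℝ) : 0 ≤ normInf v :=
  le_trans (abs_nonneg _) (abs_le_normInf v (Classical.arbitrary _))

lemma normInf_le {n : ℕ} [Nonempty (Fin n)] {v : Fin n → ℝ} {c : ℝ}
    (h : ∀ i, |v i| ≤ c) : normInf v ≤ c := ciSup_le h

lemma normInf_pos {n : ℕ} [Nonempty (Fin n)] {v : Fin n → ℝ} (h : v ≠ 0) :
    0 < normInf v := by
  obtain ⟨i, hi⟩ := Function.ne_iff.mp h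
  exact lt_of_lt_of_le (abs_pos.mpr hi) (abs_le_normInf v i)

lemma mulVec_bound {n : ℕ} [Nonempty (Fin n)] (M : Matrix (Fin n) (Fin n) ℝ)
    (x : Fin n → ℝ) :
    normInf (M.mulVec x) ≤ (∑ i, ∑ j, |M i j|) * normInf x := by
  apply normInf_le
  intro i
  calc |M.mulVec x i| = |∑ j, M i j * x j| := rfl
    _ ≤ ∑ j, |M i j * x j| := Finset.abs_sum_le_sum_abs _ _
    _ ≤ ∑ j, |M i j| * normInf x := by
        refine Finset.sum_le_sum fun j _ => ?_
        rw [abs_mul]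
        exact mul_le_mul_of_nonneg_left (abs_le_normInf x j) (abs_nonneg _)
    _ = (∑ j, |M i j|) * normInf x := by rw [Finset.sum_mul]
    _ ≤ (∑ i, ∑ j, |M i j|) * normInf x := by
        refine mul_le_mul_of_nonneg_right ?_ (normInf_nonneg x)
        exact Finset.single_le_sum (f := fun i => ∑ j, |M i j|)
          (fun i _ => Finset.sum_nonneg fun j _ => abs_nonneg _) (Finset.mem_univ i)

lemma opNormInf_bddAbove {n : ℕ} [Nonempty (Fin n)] (M : Matrix (Fin n) (Fin n) ℝ) :
    BddAbove {c | ∃ x : Fin n → ℝ, x ≠ 0 ∧ c = normInf (M.mulVec x) / normInf x} := by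
  refine ⟨∑ i, ∑ j, |M i j|, ?_⟩
  rintro c ⟨x, hx, rfl⟩
  rw [div_le_iff₀ (normInf_pos hx)]
  exact mulVec_bound M x

lemma normInf_zero {n : ℕ} [Nonempty (Fin n)] : normInf (0 : Fin n → ℝ) = 0 := by
  simp [normInf]

lemma normInf_mulVec_le {n : ℕ} [Nonempty (Fin n)] (M : Matrix (Fin n) (Fin n) ℝ)
    (x : Fin n → ℝ) :
    normInf (M.mulVec x) ≤ opNormInf M * normInf x := by
  rcases eq_or_ne x 0 with rfl | hx
  · simp [Matrix.mulVec_zero, normInf_zero]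
  · have h : normInf (M.mulVec x) / normInf x ≤ opNormInf M :=
      le_csSup (opNormInf_bddAbove M) ⟨x, hx, rfl⟩
    calc normInf (M.mulVec x)
        = normInf (M.mulVec x) / normInf x * normInf x := by
          rw [div_mul_cancel₀ _ (normInf_pos hx).ne']
      _ ≤ opNormInf M * normInf x := mul_le_mul_of_nonneg_right h (normInf_nonneg x)

lemma prob_dot_le {n : ℕ} [Nonempty (Fin n)] (e u : Fin n → ℝ)
    (hnn : ∀ i, 0 ≤ e i) (hs : ∑ i, e i = 1) :
    |∑ i, e i * u i| ≤ normInf u := by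
  calc |∑ i, e i * u i| ≤ ∑ i, |e i * u i| := Finset.abs_sum_le_sum_abs _ _
    _ ≤ ∑ i, e i * normInf u := by
        refine Finset.sum_le_sum fun i _ => ?_
        rw [abs_mul, abs_of_nonneg (hnn i)]
        exact mul_le_mul_of_nonneg_left (abs_le_normInf u i) (hnn i)
    _ = normInf u := by rw [← Finset.sum_mul, hs, one_mul]

theorem stmt_1 {n : ℕ} (δ : ℝ) (E : Matrix (Fin n) (Fin n) ℝ)
    (hE : IsUnit E.det)
    (hrow_nonneg : ∀ k i, 0 ≤ E k i) (hrow_sum : ∀ k, ∑ i, E k i = 1)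
    (G Gh : Fin n → ℝ) (Gs Ghs : Fin n → Fin n → ℝ)
    (heq : ∀ k, ∑ i, E k i * Gs k i = ∑ i, E k i * Ghs k i)
    (hG : ∀ k, normInf (G - Gs k) ≤ δ)
    (hGh : ∀ k, normInf (Gh - Ghs k) ≤ δ) :
    normInf (G - Gh) ≤ 2 * opNormInf E⁻¹ * δ := by
  rcases Nat.eq_zero_or_pos n with rfl | hn
  · have h1 : normInf (G - Gh) = 0 := by
      simp [normInf, Real.iSup_of_isEmpty]
    have h2 : opNormInf (E⁻¹) = 0 := by
      have : {c | ∃ x : Fin 0 → ℝ, x ≠ 0 ∧ c = normInf ((E⁻¹).mulVec x) / normInf x}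
          = ∅ := by
        ext c
        simp only [Set.mem_setOf_eq, Set.mem_empty_iff_false, iff_false, not_exists]
        intro x ⟨hx, _⟩
        exact hx (funext fun i => absurd i.2 (by omega))
      rw [opNormInf, this, Real.sSup_empty]
    rw [h1, h2]
    simp
  · haveI : Nonempty (Fin n) := ⟨⟨0, hn⟩⟩
    have hδ : 0 ≤ δ := le_trans (normInf_nonneg _) (hG (Classical.arbitrary _))
    have key : ∀ k, |E.mulVec (G - Gh) k| ≤ 2 * δ := by
      intro k
      have hsplit : E.mulVec (G - Gh) k
          = (∑ i, E k i * (G i - Gs k i)) - (∑ i, E k i * (Gh i - Ghs k i))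
            + ((∑ i, E k i * Gs k i) - (∑ i, E k i * Ghs k i)) := by
        simp only [Matrix.mulVec, dotProduct, Pi.sub_apply, mul_sub,
          Finset.sum_sub_distrib]
        ring
      rw [hsplit, heq k, sub_self, add_zero]
      have h1 : |∑ i, E k i * (G i - Gs k i)| ≤ δ := by
        refine le_trans ?_ (hG k)
        have := prob_dot_le (E k) (G - Gs k) (hrow_nonneg k) (hrow_sum k)
        simpa using this
      have h2 : |∑ i, E k i * (Gh i - Ghs k i)| ≤ δ := by
        refine le_trans ?_ (hGh k)
        have := prob_dot_le (E k) (Gh - Ghs k) (hrow_nonneg k) (hrow_sum k)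
        simpa using this
      calc |(∑ i, E k i * (G i - Gs k i)) - (∑ i, E k i * (Gh i - Ghs k i))|
          ≤ |∑ i, E k i * (G i - Gs k i)| + |∑ i, E k i * (Gh i - Ghs k i)| :=
            abs_sub _ _
        _ ≤ δ + δ := add_le_add h1 h2
        _ = 2 * δ := by ring
    have hnorm : normInf (E.mulVec (G - Gh)) ≤ 2 * δ := normInf_le key
    have hrec : G - Gh = (E⁻¹).mulVec (E.mulVec (G - Gh)) := by
      rw [Matrix.mulVec_mulVec, Matrix.nonsing_inv_mul E hE, Matrix.one_mulVec]
    have hop : 0 ≤ opNormInf (E⁻¹) := by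
      have hx : (fun _ : Fin n => (1 : ℝ)) ≠ 0 := by
        intro h
        have := congrFun h (Classical.arbitrary _)
        simpa using this
      refine le_trans ?_ (le_csSup (opNormInf_bddAbove _) ⟨_, hx, rfl⟩)
      exact div_nonneg (normInf_nonneg _) (normInf_nonneg _)
    calc normInf (G - Gh) = normInf ((E⁻¹).mulVec (E.mulVec (G - Gh))) := by rw [← hrec]
      _ ≤ opNormInf (E⁻¹) * normInf (E.mulVec (G - Gh)) := normInf_mulVec_le _ _
      _ ≤ opNormInf (E⁻¹) * (2 * δ) := mul_le_mul_of_nonneg_left hnorm hop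
      _ = 2 * opNormInf E⁻¹ * δ := by ring
end

section
/- Let e ∈ ℝ^{m₁×m₂} be a probability distribution whose nonzero rows e(i,:) ∈ ℝ^{m₂} are linearly independent. For i ≠ i' define ẽ_{ii'} ∈ ℝ^{m₁×m₂} by ẽ_{ii'}(h,j) = −e(i,j) if h = i, e(i,j) if h = i', and 0 otherwise. Then the nonzero vectors among {ẽ_{ii'}} are linearly independent, and consequently there exists G ∈ ℝ^{m₁×m₂} with ẽ_{ii'}' G < 0 for all pairs (i,i') with ẽ_{ii'} ≠ 0. -/
/-- The vector ẽ_{ii'} associated to distribution `e` and pair of actions `i ≠ i'`. -/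
def te {m₁ m₂ : ℕ} (e : Matrix (Fin m₁) (Fin m₂) ℝ) (i i' : Fin m₁) :
    Matrix (Fin m₁) (Fin m₂) ℝ :=
  Matrix.of fun h j => if h = i then -e i j else if h = i' then e i j else 0

/-!
For `i ≠ i'`, `ẽ_{ii'}` is the outer product `(δ_{i'} - δ_i) e(i,:)ᵀ`, and it vanishes when
`e(i,:)` does. Outer products `u_x v_{a x}ᵀ` are linearly independent as soon as the `v_k` are
and, on each fibre of `a`, the `u_x` are. Here the `v_k` are the nonzero rows of `e`, and for a
fixed `i` the vectors `δ_{i'} - δ_i` are the edges at one vertex of the standard simplex. Being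
linearly independent, the `ẽ_{ii'}` admit a linear functional equal to `-1` on all of them, and
every linear functional on matrices has the form `A ↦ ∑ A(h,j) G(h,j)`.
-/

open Matrix

theorem linearIndependent_single_one_sub_single_one {ι m R : Type*} [Ring R] [DecidableEq m]
    (i₀ : m) {b : ι → m} (hb : Function.Injective b) (hb₀ : ∀ x, b x ≠ i₀) :
    LinearIndependent R fun x => (Pi.single (b x) 1 - Pi.single i₀ 1 : m → R) := by
  have hvsub := (affineIndependent_iff_linearIndependent_vsub R _ i₀).mp
    (Pi.linearIndependent_single_one m R).affineIndependent
  exact hvsub.comp (fun x => ⟨b x, hb₀ x⟩) fun x y h => hb (congrArg Subtype.val h)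

/-- Row `h` of a relation among the `u x ⊗ v (a x)` is a relation among the `v k`, whose
coefficients are, fibre by fibre, the `h`-th coordinates of a relation among the `u x`. -/
theorem Matrix.linearIndependent_vecMulVec {ι κ m n R : Type*} [CommRing R]
    [Fintype ι] [Fintype κ] [DecidableEq κ]
    {a : ι → κ} {u : ι → m → R} {v : κ → n → R} (hv : LinearIndependent R v)
    (hu : ∀ k, LinearIndependent R fun x : {x // a x = k} => u x) :
    LinearIndependent R fun x => vecMulVec (u x) (v (a x)) := by
  rw [Fintype.linearIndependent_iff] at hv ⊢
  intro g hg x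
  have hfiber : ∀ k h, ∑ y : {y // a y = k}, g y * u y h = 0 := by
    intro k h
    refine hv (fun k => ∑ y : {y // a y = k}, g y * u y h) ?_ k
    have hrow : ∑ x, (g x * u x h) • v (a x) = 0 := by
      ext j
      simpa [Matrix.sum_apply, vecMulVec_apply, mul_assoc] using congrFun (congrFun hg h) j
    rw [← hrow, ← Fintype.sum_fiberwise a]
    refine Finset.sum_congr rfl fun k _ => ?_
    rw [Finset.sum_smul]
    exact Finset.sum_congr rfl fun y _ => by rw [y.2]
  refine Fintype.linearIndependent_iff.mp (hu (a x)) (fun y => g y) ?_ ⟨x, rfl⟩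
  ext h
  simpa [Finset.sum_apply] using hfiber (a x) h

theorem Matrix.exists_sum_sum_mul_eq {m n R : Type*} [Fintype m] [Fintype n] [DecidableEq m]
    [DecidableEq n] [CommSemiring R] (f : Module.Dual R (Matrix m n R)) :
    ∃ G : Matrix m n R, ∀ A, ∑ i, ∑ j, A i j * G i j = f A := by
  refine ⟨of fun i j => f (single i j 1), fun A => ?_⟩
  conv_rhs => rw [matrix_eq_sum_single A]
  simp only [map_sum, of_apply]
  refine Finset.sum_congr rfl fun i _ => Finset.sum_congr rfl fun j _ => ?_
  rw [← smul_eq_mul, ← map_smul, smul_single, smul_eq_mul, mul_one]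

section te

variable {m₁ m₂ : ℕ} (e : Matrix (Fin m₁) (Fin m₂) ℝ)

theorem te_eq_vecMulVec {i i' : Fin m₁} (h : i ≠ i') :
    te e i i' = vecMulVec (Pi.single i' 1 - Pi.single i 1) (e i) := by
  ext k j
  by_cases hk : k = i
  · subst hk
    simp [te, vecMulVec_apply, h]
  · by_cases hk' : k = i' <;> simp [te, vecMulVec_apply, hk, hk', h.symm]

variable {e} in
theorem ne_zero_of_te_ne_zero {i i' : Fin m₁} (h : te e i i' ≠ 0) : e i ≠ 0 := by
  rintro hi
  apply h
  ext k j
  simp [te, congrFun hi j]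

theorem linearIndependent_te
    (hli : LinearIndependent ℝ (fun i : {i : Fin m₁ // e i ≠ 0} => e i.1)) :
    LinearIndependent ℝ
      (fun p : {p : Fin m₁ × Fin m₁ // p.1 ≠ p.2 ∧ te e p.1 p.2 ≠ 0} => te e p.1.1 p.1.2) := by
  classical
  set P := {p : Fin m₁ × Fin m₁ // p.1 ≠ p.2 ∧ te e p.1 p.2 ≠ 0}
  let a : P → {i : Fin m₁ // e i ≠ 0} := fun p => ⟨p.1.1, ne_zero_of_te_ne_zero p.2.2⟩
  let u : P → Fin m₁ → ℝ := fun p => Pi.single p.1.2 1 - Pi.single (a p).1 1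
  have hte : (fun p : P => te e p.1.1 p.1.2) = fun p => vecMulVec (u p) (e (a p)) :=
    funext fun p => te_eq_vecMulVec e p.2.1
  rw [hte]
  refine linearIndependent_vecMulVec (a := a) (u := u) (v := fun k => e k.1) hli fun k => ?_
  have hu : (fun x : {x // a x = k} => u x) = fun x => Pi.single x.1.1.2 1 - Pi.single k.1 1 :=
    funext fun x => by simp only [u, x.2]
  rw [hu]
  have hfst : ∀ x : {x // a x = k}, x.1.1.1 = k.1 := fun x => congrArg Subtype.val x.2
  refine linearIndependent_single_one_sub_single_one k.1 (fun x y hxy => ?_) fun x => ?_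
  · exact Subtype.ext (Subtype.ext (Prod.ext ((hfst x).trans (hfst y).symm) hxy))
  · exact hfst x ▸ x.1.2.1.symm

end te

theorem stmt_18_general (m₁ m₂ : ℕ) (e : Matrix (Fin m₁) (Fin m₂) ℝ)
    (hli : LinearIndependent ℝ (fun i : {i : Fin m₁ // e i ≠ 0} => e i.1)) :
    LinearIndependent ℝ
      (fun p : {p : Fin m₁ × Fin m₁ // p.1 ≠ p.2 ∧ te e p.1 p.2 ≠ 0} =>
        te e p.1.1 p.1.2) ∧
    ∃ G : Matrix (Fin m₁) (Fin m₂) ℝ, ∀ i i' : Fin m₁, i ≠ i' → te e i i' ≠ 0 →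
      ∑ h, ∑ j, te e i i' h j * G h j < 0 := by
  have hind := linearIndependent_te e hli
  obtain ⟨f, hf⟩ := Module.exists_dual_forall_apply_eq_one (linearIndepOn_univ_iff.mpr hind)
  obtain ⟨G, hG⟩ := exists_sum_sum_mul_eq (-f)
  refine ⟨hind, G, fun i i' hne hte => ?_⟩
  rw [hG, LinearMap.neg_apply, hf ⟨(i, i'), hne, hte⟩ (Set.mem_univ _)]
  exact neg_one_lt_zero

theorem stmt_18 (m₁ m₂ : ℕ) (e : Matrix (Fin m₁) (Fin m₂) ℝ)
    (he : ∀ i j, 0 ≤ e i j) (hsum : ∑ i, ∑ j, e i j = 1)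
    (hli : LinearIndependent ℝ (fun i : {i : Fin m₁ // e i ≠ 0} => e i.1)) :
    LinearIndependent ℝ
      (fun p : {p : Fin m₁ × Fin m₁ // p.1 ≠ p.2 ∧ te e p.1 p.2 ≠ 0} =>
        te e p.1.1 p.1.2) ∧
    ∃ G : Matrix (Fin m₁) (Fin m₂) ℝ, ∀ i i' : Fin m₁, i ≠ i' → te e i i' ≠ 0 →
      ∑ h, ∑ j, te e i i' h j * G h j < 0 :=
  stmt_18_general m₁ m₂ e hli
end
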